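/- Let O ⊆ P contain A. For every fixed i ∈ [1,n], the map j ↦ r(i,j) is a bijection from [i,n] ∪ [−n,−i] to itself. -/

import Mathlib

open scoped Classical Pointwise

noncomputable section

/-- Position of `j` in the total order `1 ⋖ … ⋖ n ⋖ -n ⋖ … ⋖ -1` on `N`. -/
def ordKey (n : ℕ) (j : ℤ) : ℤ := if 0 < j then j else 2 * n + 1 + j

/-- Membership in the type C Gelfand–Tsetlin poset `P`:
pairs `(i,j)` with `1 ≤ i ≤ n` and `i ≤ |j| ≤ n`. -/
def inP (n : ℕ) (p : ℤ × ℤ) : Prop :=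
  1 ≤ p.1 ∧ p.1 ≤ (n : ℤ) ∧ p.1 ≤ |p.2| ∧ |p.2| ≤ (n : ℤ)

/-- The order relation `⪯` of `P`: `(i₁,j₁) ⪯ (i₂,j₂)` iff `i₁ ≤ i₂` and `j₁ ⩽̇ j₂`. -/
def ple (n : ℕ) (p q : ℤ × ℤ) : Prop :=
  p.1 ≤ q.1 ∧ ordKey n p.2 ≤ ordKey n q.2

/-- Strict version of `⪯`. -/
def plt (n : ℕ) (p q : ℤ × ℤ) : Prop := ple n p q ∧ p ≠ q

/-- The elements of `N = {1,…,n,-n,…,-1}` listed in increasing `⋖` order. -/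
def jList (n : ℕ) : List ℤ :=
  ((List.range n).map fun t => (t : ℤ) + 1) ++ ((List.range n).map fun t => (t : ℤ) - n)

/-- All pairs `(i,j)` with `i ∈ [1,n]`, `j ∈ N`, ordered first by `i` increasing,
then by `j` increasing with respect to `⋖`. -/
def posList (n : ℕ) : List (ℤ × ℤ) :=
  (List.range n).flatMap fun a => (jList n).map fun j => ((a : ℤ) + 1, j)

/-- `P` as a finite set. -/
def Pfin (n : ℕ) : Finset (ℤ × ℤ) := (posList n).toFinset.filter (inP n)

/-- `N` as a finite set. -/
def Nfin (n : ℕ) : Finset ℤ := (jList n).toFinset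

/-- The diagonal `A = {(i,i) : 1 ≤ i ≤ n}`. -/
def Aset (n : ℕ) : Finset (ℤ × ℤ) :=
  (Finset.range n).image fun t => (((t : ℤ) + 1, (t : ℤ) + 1) : ℤ × ℤ)

/-- Order ideals (downward closed subsets) of `P`. -/
def IsIdeal (n : ℕ) (J : Finset (ℤ × ℤ)) : Prop :=
  (∀ p ∈ J, inP n p) ∧ ∀ p ∈ J, ∀ q ∈ Pfin n, ple n q p → q ∈ J

/-- The set of `≺`-maximal elements of `J`. -/
def maxPrec (n : ℕ) (J : Finset (ℤ × ℤ)) : Finset (ℤ × ℤ) :=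
  J.filter fun p => ∀ q ∈ J, ple n p q → q = p

/-- `M_O(J) = (J ∩ O) ∪ max_≺(J)`. -/
def MO (n : ℕ) (O J : Finset (ℤ × ℤ)) : Finset (ℤ × ℤ) := (J ∩ O) ∪ maxPrec n J

/-- The permutation `w_M`: the product of the transpositions `s_{i,j}` over `(i,j) ∈ M`,
ordered first by `i` increasing and then by `j` increasing with respect to `⋖`
(the leftmost factor acts last). -/
def wPerm (n : ℕ) (M : Finset (ℤ × ℤ)) : Equiv.Perm ℤ :=
  (((posList n).filter fun p => decide (p ∈ M)).map fun p => Equiv.swap p.1 p.2).prod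

/-- `w^{O,J} = w_O⁻¹ ⬝ w_{M_O(J)}`. -/
def wOJ (n : ℕ) (O J : Finset (ℤ × ℤ)) : Equiv.Perm ℤ :=
  (wPerm n O)⁻¹ * wPerm n (MO n O J)

/-- The principal order ideal `⟨i,j⟩` of `(i,j) ∈ P`. -/
def princ (n : ℕ) (p : ℤ × ℤ) : Finset (ℤ × ℤ) := (Pfin n).filter fun q => ple n q p

/-- `r(i,j) = w^{O,⟨i,j⟩}(i)`. -/
def rMap (n : ℕ) (O : Finset (ℤ × ℤ)) (i j : ℤ) : ℤ := wOJ n O (princ n (i, j)) i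

/-- Inverse of `ordKey` (on the relevant range `[1, 2n]`). -/
def invOrdKey (n : ℕ) (t : ℤ) : ℤ := if t ≤ (n : ℤ) then t else t - (2 * n + 1)

/-- The `⋖`-maximal `j'` with `j' ⋖ j` and `(i,j') ∈ O`. -/
def prevO (n : ℕ) (O : Finset (ℤ × ℤ)) (i j : ℤ) : ℤ :=
  invOrdKey n (WithBot.unbotD 0 ((((Nfin n).filter fun j' => (i, j') ∈ O ∧ ordKey n j' < ordKey n j).image
    (ordKey n)).max))

/-- The pipe-dream linear transform `ξ` of `ℝ^P` (coordinates outside `P` are untouched):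
`ξ(ε_{i,i}) = ε_{i,r(i,i)}` and `ξ(ε_{i,j}) = ε_{i,r(i,j)} - ε_{i,r(i,j')}` for `j ≠ i`,
where `j'` is `⋖`-maximal with `j' ⋖ j` and `(i,j') ∈ O`. -/
def xiMap (n : ℕ) (O : Finset (ℤ × ℤ)) (x : (ℤ × ℤ) → ℝ) : (ℤ × ℤ) → ℝ := fun q =>
  if inP n q then
    (∑ j ∈ (Nfin n).filter (fun j => inP n (q.1, j) ∧ rMap n O q.1 j = q.2), x (q.1, j))
    - (∑ j ∈ (Nfin n).filter
        (fun j => inP n (q.1, j) ∧ j ≠ q.1 ∧ rMap n O q.1 (prevO n O q.1 j) = q.2), x (q.1, j))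
  else x q

/-- Indicator vector `1_{M_O(J)} ∈ ℝ^P`. -/
def indicMO (n : ℕ) (O J : Finset (ℤ × ℤ)) : (ℤ × ℤ) → ℝ := fun p =>
  if p ∈ MO n O J then 1 else 0

/-- The fundamental marked chain-order polytope `𝒬_O(ω_k)`:
the convex hull of the vectors `1_{M_O(J)}`, `J ∈ 𝒥ₖ`. -/
def QOfund (n : ℕ) (O : Finset (ℤ × ℤ)) (k : ℕ) : Set ((ℤ × ℤ) → ℝ) :=
  convexHull ℝ {x | ∃ J : Finset (ℤ × ℤ),
    IsIdeal n J ∧ (J ∩ Aset n).card = k ∧ x = indicMO n O J}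

/-- The marked chain-order polytope `𝒬_O(λ)` for `λ = a₁ω₁ + … + a_nω_n`:
the Minkowski sum `a₁𝒬_O(ω₁) + … + a_n𝒬_O(ω_n)`. -/
def QO (n : ℕ) (O : Finset (ℤ × ℤ)) (a : ℕ → ℕ) : Set ((ℤ × ℤ) → ℝ) :=
  ∑ k ∈ Finset.Icc 1 n, a k • QOfund n O k

/-- Integrality (lattice point) predicate. -/
def IsLat (x : (ℤ × ℤ) → ℝ) : Prop := ∀ p, ∃ m : ℤ, x p = m

/-- Type B: `λ(i) = a_i + … + a_{n-1} + a_n/2`. -/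
def lamB (n : ℕ) (a : ℕ → ℕ) (i : ℤ) : ℝ :=
  (∑ t ∈ Finset.Icc i.toNat (n - 1), (a t : ℝ)) + (a n : ℝ) / 2

/-- The type B poset polytope `𝒬^B_O(λ)` (H-description with factor `1/2`
on the coordinates in `B = {(i,-i)}`). -/
def QB (n : ℕ) (O : Finset (ℤ × ℤ)) (lam : ℤ → ℝ) : Set ((ℤ × ℤ) → ℝ) :=
  {x | (∀ i : ℤ, 1 ≤ i → i ≤ (n : ℤ) → x (i, i) = lam i) ∧
    (∀ p, inP n p → 0 ≤ x p) ∧ (∀ p, ¬ inP n p → x p = 0) ∧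
    ∀ (pq rs : ℤ × ℤ) (c : List (ℤ × ℤ)), pq ∈ O → inP n rs →
      (∀ q ∈ c, inP n q ∧ q ∉ O) →
      List.Chain' (plt n) (pq :: (c ++ [rs])) →
      (c.map x).sum ≤ x pq - (if rs.2 = -rs.1 then (1 : ℝ) / 2 else 1) * x rs}

/-- The point `x^{J,D}`. -/
def xJD (n : ℕ) (O J : Finset (ℤ × ℤ)) (D : Finset ℤ) : (ℤ × ℤ) → ℝ := fun p =>
  if p ∈ MO n O J then (if p.2 = -p.1 ∧ p.1 ∉ D then 2 else 1) else 0

/-- The projection `π : ℝ^P → ℝ^{P∖A}` (realized by zeroing the `A`-coordinates). -/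
def piA (x : (ℤ × ℤ) → ℝ) : (ℤ × ℤ) → ℝ := fun p => if p.2 = p.1 then 0 else x p

/-- The transformed type B poset polytope `Π^B_O(λ) = πξ(𝒬^B_O(λ))`. -/
def PiB (n : ℕ) (O : Finset (ℤ × ℤ)) (a : ℕ → ℕ) : Set ((ℤ × ℤ) → ℝ) :=
  (fun x => piA (xiMap n O x)) '' QB n O (lamB n a)

/-- The point `y^D ∈ ℝ^{P∖A}`. -/
def yD (D : Finset ℤ) : (ℤ × ℤ) → ℝ := fun p => if p.2 = -p.1 ∧ p.1 ∈ D then 1 else 0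

/-!
Factor `w_M` by rows, `w_M = R_1(M) ⋯ R_n(M)` with `R_a(M) = ∏ s_{a,b}` over `(a,b) ∈ M` in
`⋖`-order. For `M = M_O(⟨i,j⟩)` the rows above `i` are empty and row `i` sends `i` to `j`. In a row
`a < i`, the factors of `R_a(O)` missing from `R_a(M)` are the `s_{a,b}` with `j ⋖ b`; they act
first and fix the current image of `j`, which stays `⋖`-below `j`. Hence
`w_M(i) = R_1(O) ⋯ R_{i-1}(O) (j)` and `r(i,j) = (R_i(O) ⋯ R_n(O))⁻¹ (j)`. As `O ⊆ P`, every
transposition in the rows `≥ i` swaps two elements of `[i,n] ∪ [-n,-i]`, so this permutation maps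
that set bijectively onto itself.
-/

open MulAction

theorem List.filter_append_filter_not_of_pairwise {α : Type*} {p : α → Bool} :
    ∀ {l : List α}, l.Pairwise (fun x y => p y → p x) → l.filter p ++ l.filter (fun x => !p x) = l
  | [], _ => rfl
  | x :: l, h => by
    rw [List.pairwise_cons] at h
    by_cases hx : p x
    · simp [hx, List.filter_append_filter_not_of_pairwise h.2]
    · have hnil : l.filter p = [] := List.filter_eq_nil_iff.2 fun y hy hpy => hx (h.1 y hy hpy)
      have := List.filter_append_filter_not_of_pairwise h.2
      rw [hnil, List.nil_append] at this
      simp [hx, hnil, this]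

namespace Equiv.Perm

theorem bijOn_of_mem_stabilizer {α : Type*} {g : Perm α} {S : Set α}
    (hg : g ∈ stabilizer (Perm α) S) : Set.BijOn g S S := by
  have himage : g '' S = S := (Set.image_smul (a := g) (t := S)).trans (mem_stabilizer_iff.1 hg)
  simpa only [himage] using g.injective.injOn.bijOn_image (s := S)

variable {α : Type*} [DecidableEq α]

theorem prod_map_swap_mem_stabilizer {S : Set α} {a : α} {l : List α} (ha : a ∈ S)
    (hl : ∀ b ∈ l, b ∈ S) : (l.map (swap a)).prod ∈ stabilizer (Perm α) S :=
  Subgroup.list_prod_mem _ <| by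
    simpa using fun b hb => swap_mem_stabilizer ha (hl b hb)

theorem prod_map_swap_apply_eq_self {a x : α} {l : List α} (hl : ∀ b ∈ l, x ≠ a ∧ x ≠ b) :
    (l.map (swap a)).prod x = x :=
  mem_stabilizer_iff.1 <| Subgroup.list_prod_mem (stabilizer (Perm α) x) <| by
    simpa [mem_stabilizer_iff] using fun b hb => swap_apply_of_ne_of_ne (hl b hb).1 (hl b hb).2

end Equiv.Perm

section TypeC

variable {n : ℕ}

theorem jList_eq (n : ℕ) :
    jList n = ((List.range n).map fun t : ℕ => (t : ℤ) + 1) ++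
      ((List.range n).map fun t : ℕ => (t : ℤ) - n) := by
  simp [jList, ← List.map_eq_flatMap]
  rfl

theorem posList_eq (n : ℕ) :
    posList n = (List.range n).flatMap fun t : ℕ => (jList n).map fun j => ((t : ℤ) + 1, j) := by
  simp [posList, ← List.map_eq_flatMap, List.flatMap_map]

theorem mem_jList {b : ℤ} : b ∈ jList n ↔ 1 ≤ |b| ∧ |b| ≤ n := by
  simp only [jList_eq, List.mem_append, List.mem_map, List.mem_range]
  constructor
  · rintro (⟨t, ht, rfl⟩ | ⟨t, ht, rfl⟩) <;> constructor <;>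
      cases abs_cases ((t : ℤ) + 1) <;> cases abs_cases ((t : ℤ) - n) <;> omega
  · intro h
    cases abs_cases b
    · exact .inl ⟨(b - 1).toNat, by omega, by omega⟩
    · exact .inr ⟨(b + n).toNat, by omega, by omega⟩

theorem ordKey_of_pos {j : ℤ} (hj : 0 < j) : ordKey n j = j := if_pos hj

theorem abs_le_ordKey {j : ℤ} (hj : |j| ≤ n) : |j| ≤ ordKey n j := by
  unfold ordKey
  split_ifs <;> cases abs_cases j <;> omega

theorem inP.le_ordKey {p : ℤ × ℤ} (hp : inP n p) : p.1 ≤ ordKey n p.2 :=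
  hp.2.2.1.trans (abs_le_ordKey hp.2.2.2)

theorem ordKey_injOn : Set.InjOn (ordKey n) {j | |j| ≤ n} := by
  intro x hx y hy h
  simp only [Set.mem_ofPred_eq, ordKey] at hx hy h
  split_ifs at h <;> cases abs_cases x <;> cases abs_cases y <;> omega

theorem jList_pairwise (n : ℕ) : (jList n).Pairwise (ordKey n · < ordKey n ·) := by
  have key : ∀ t : ℕ, t < n → ordKey n ((t : ℤ) + 1) = t + 1 ∧ ordKey n ((t : ℤ) - n) = n + 1 + t :=
    fun t ht => by simp only [ordKey]; constructor <;> split_ifs <;> omega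
  rw [jList_eq, List.pairwise_append, List.pairwise_map, List.pairwise_map]
  refine ⟨List.pairwise_lt_range.imp_of_mem ?_, List.pairwise_lt_range.imp_of_mem ?_, ?_⟩
  · intro s t hs ht hst
    rw [List.mem_range] at hs ht
    rw [(key s hs).1, (key t ht).1]
    omega
  · intro s t hs ht hst
    rw [List.mem_range] at hs ht
    rw [(key s hs).2, (key t ht).2]
    omega
  · simp only [List.mem_map, List.mem_range]
    rintro _ ⟨s, hs, rfl⟩ _ ⟨t, ht, rfl⟩
    rw [(key s hs).1, (key t ht).2]
    omega

theorem mem_Pfin {p : ℤ × ℤ} : p ∈ Pfin n ↔ inP n p := by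
  simp only [Pfin, Finset.mem_filter, List.mem_toFinset, and_iff_right_iff_imp]
  rintro ⟨h1, h2, h3, h4⟩
  rw [posList_eq, List.mem_flatMap]
  exact ⟨(p.1 - 1).toNat, List.mem_range.2 (by omega),
    List.mem_map.2 ⟨p.2, mem_jList.2 ⟨by omega, h4⟩, by ext <;> simp; omega⟩⟩

theorem ple_antisymm {p q : ℤ × ℤ} (hp : inP n p) (hq : inP n q) (hpq : ple n p q)
    (hqp : ple n q p) : p = q :=
  Prod.ext (le_antisymm hpq.1 hqp.1) (ordKey_injOn hp.2.2.2 hq.2.2.2 (le_antisymm hpq.2 hqp.2))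

theorem mem_princ {p q : ℤ × ℤ} : q ∈ princ n p ↔ inP n q ∧ ple n q p := by
  rw [princ, Finset.mem_filter, mem_Pfin]

theorem maxPrec_princ {p : ℤ × ℤ} (hp : inP n p) : maxPrec n (princ n p) = {p} := by
  have hpp : p ∈ princ n p := mem_princ.2 ⟨hp, le_rfl, le_rfl⟩
  ext q
  simp only [maxPrec, Finset.mem_filter, Finset.mem_singleton]
  constructor
  · rintro ⟨hq, hmax⟩
    exact (hmax p hpp (mem_princ.1 hq).2).symm
  · rintro rfl
    refine ⟨hpp, fun r hr hqr => ?_⟩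
    obtain ⟨hr, hrq⟩ := mem_princ.1 hr
    exact ple_antisymm hr hp hrq hqr

theorem mem_MO_princ {O : Finset (ℤ × ℤ)} {p q : ℤ × ℤ} (hO : O ⊆ Pfin n) (hp : inP n p) :
    q ∈ MO n O (princ n p) ↔ q ∈ O ∧ ple n q p ∨ q = p := by
  rw [MO, Finset.mem_union, Finset.mem_inter, maxPrec_princ hp, Finset.mem_singleton, mem_princ]
  constructor
  · rintro (⟨⟨-, hqp⟩, hq⟩ | rfl)
    exacts [.inl ⟨hq, hqp⟩, .inr rfl]
  · rintro (⟨hq, hqp⟩ | rfl)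
    exacts [.inl ⟨⟨mem_Pfin.1 (hO hq), hqp⟩, hq⟩, .inr rfl]

theorem MO_princ_subset {O : Finset (ℤ × ℤ)} {p : ℤ × ℤ} (hO : O ⊆ Pfin n) (hp : inP n p) :
    MO n O (princ n p) ⊆ Pfin n := by
  intro q hq
  rcases (mem_MO_princ hO hp).1 hq with ⟨hq, -⟩ | rfl
  exacts [hO hq, mem_Pfin.2 hp]

end TypeC

section Rows

variable {n : ℕ}

def rowList (n : ℕ) (a : ℤ) (M : Finset (ℤ × ℤ)) : List ℤ :=
  (jList n).filter fun b => (a, b) ∈ M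

def rowPerm (n : ℕ) (a : ℤ) (M : Finset (ℤ × ℤ)) : Equiv.Perm ℤ :=
  ((rowList n a M).map (Equiv.swap a)).prod

theorem rowList_pairwise (a : ℤ) (M : Finset (ℤ × ℤ)) :
    (rowList n a M).Pairwise (ordKey n · < ordKey n ·) :=
  (jList_pairwise n).filter _

theorem mem_rowList {M : Finset (ℤ × ℤ)} {a b : ℤ} (hM : M ⊆ Pfin n) :
    b ∈ rowList n a M ↔ (a, b) ∈ M := by
  simp only [rowList, List.mem_filter, decide_eq_true_eq, and_iff_right_iff_imp]
  intro hab
  obtain ⟨h1, -, h3, h4⟩ := mem_Pfin.1 (hM hab)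
  exact mem_jList.2 ⟨h1.trans h3, h4⟩

theorem wPerm_eq_prod_rowPerm (n : ℕ) (M : Finset (ℤ × ℤ)) :
    wPerm n M = ((List.range n).map fun t : ℕ => rowPerm n ((t : ℤ) + 1) M).prod := by
  rw [wPerm, posList_eq, List.filter_flatMap, List.map_flatMap, List.flatMap_def,
    List.prod_flatten, List.map_map]
  congr 1
  refine List.map_congr_left fun t _ => ?_
  simp [rowPerm, rowList, List.filter_map, List.map_map]
  rfl

theorem rowPerm_mem_stabilizer {M : Finset (ℤ × ℤ)} {a : ℤ} {S : Set ℤ} (hM : M ⊆ Pfin n)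
    (ha : a ∈ S) (hrow : ∀ b, (a, b) ∈ M → b ∈ S) :
    rowPerm n a M ∈ stabilizer (Equiv.Perm ℤ) S :=
  Equiv.Perm.prod_map_swap_mem_stabilizer ha fun b hb => hrow b ((mem_rowList hM).1 hb)

def lowerRowsPerm (n : ℕ) (M : Finset (ℤ × ℤ)) (k : ℕ) : Equiv.Perm ℤ :=
  ((List.range k).map fun t : ℕ => rowPerm n ((t : ℤ) + 1) M).prod

def upperRowsPerm (n : ℕ) (M : Finset (ℤ × ℤ)) (k : ℕ) : Equiv.Perm ℤ :=
  ((List.range (n - k)).map fun t : ℕ => rowPerm n ((k : ℤ) + t + 1) M).prod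

theorem wPerm_eq_lowerRowsPerm_mul_upperRowsPerm (M : Finset (ℤ × ℤ)) {k : ℕ} (hk : k ≤ n) :
    wPerm n M = lowerRowsPerm n M k * upperRowsPerm n M k := by
  obtain ⟨m, rfl⟩ := Nat.exists_eq_add_of_le hk
  rw [wPerm_eq_prod_rowPerm, List.range_add, List.map_append, List.prod_append, List.map_map,
    lowerRowsPerm, upperRowsPerm, Nat.add_sub_cancel_left]
  congr 3

theorem upperRowsPerm_mem_stabilizer {O : Finset (ℤ × ℤ)} (hO : O ⊆ Pfin n) (k : ℕ) :
    upperRowsPerm n O k ∈ stabilizer (Equiv.Perm ℤ) {x : ℤ | k + 1 ≤ |x| ∧ |x| ≤ n} := by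
  refine Subgroup.list_prod_mem _ fun f hf => ?_
  obtain ⟨t, ht, rfl⟩ := List.mem_map.1 hf
  rw [List.mem_range] at ht
  refine rowPerm_mem_stabilizer hO ?_ fun b hb => ?_
  · have hrow : (0 : ℤ) < k + t + 1 := by omega
    simp only [Set.mem_ofPred_eq, abs_of_pos hrow]
    omega
  · obtain ⟨-, -, h3, h4⟩ := mem_Pfin.1 (hO hb)
    exact ⟨by simp only at h3; omega, h4⟩

end Rows

section Principal

variable {n : ℕ} {O : Finset (ℤ × ℤ)} {i j : ℤ}

theorem rowPerm_MO_princ_of_lt (hO : O ⊆ Pfin n) (hij : inP n (i, j)) {a : ℤ} (hia : i < a) :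
    rowPerm n a (MO n O (princ n (i, j))) = 1 := by
  have hrow : rowList n a (MO n O (princ n (i, j))) = [] := by
    refine List.filter_eq_nil_iff.2 fun b _ => ?_
    simp only [decide_eq_true_eq, mem_MO_princ hO hij, ple, Prod.mk.injEq]
    omega
  rw [rowPerm, hrow, List.map_nil, List.prod_nil]

theorem rowPerm_MO_princ_self_apply (hO : O ⊆ Pfin n) (hij : inP n (i, j)) :
    rowPerm n i (MO n O (princ n (i, j))) i = j := by
  set M := MO n O (princ n (i, j))
  have hM := MO_princ_subset hO hij
  have hj : j ∈ rowList n i M := (mem_rowList hM).2 ((mem_MO_princ hO hij).2 (.inr rfl))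
  have hinj : ∀ b ∈ rowList n i M, ordKey n b = ordKey n j → b = j := fun b hb =>
    ordKey_injOn (mem_Pfin.1 (hM ((mem_rowList hM).1 hb))).2.2.2 hij.2.2.2
  -- `j` is the `⋖`-largest entry of row `i` of `M`, so `s_{i,j}` is the factor acting first.
  have hlast : (rowList n i M).filter (fun b => !decide (ordKey n b < ordKey n j)) = [j] := by
    rw [List.filter_congr (q := fun b => decide (b = j)), List.filter_eq,
      List.count_eq_one_of_mem ((rowList_pairwise i M).imp fun h e => h.ne (congrArg _ e)) hj,
      List.replicate_one]
    intro b hb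
    have hbj : ordKey n b ≤ ordKey n j := by
      rcases (mem_MO_princ hO hij).1 ((mem_rowList hM).1 hb) with ⟨-, -, h⟩ | h
      exacts [h, (Prod.mk.inj h).2 ▸ le_rfl]
    rw [Bool.eq_iff_iff]
    simp only [Bool.not_eq_true', decide_eq_false_iff_not, not_lt, decide_eq_true_eq]
    exact ⟨fun h => hinj b hb (le_antisymm hbj h), fun h => h ▸ le_rfl⟩
  rw [rowPerm, ← List.filter_append_filter_not_of_pairwise
      (p := fun b => decide (ordKey n b < ordKey n j))
      ((rowList_pairwise i M).imp fun hlt hp => by simp only [decide_eq_true_eq] at hp ⊢; omega),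
    hlast, List.map_append, List.prod_append, Equiv.Perm.mul_apply, List.map_singleton,
    List.prod_singleton, Equiv.swap_apply_left]
  refine Equiv.Perm.prod_map_swap_apply_eq_self fun b hb => ?_
  obtain ⟨hb, hbj⟩ := List.mem_filter.1 hb
  rw [decide_eq_true_eq] at hbj
  have hib : i ≤ ordKey n b := (mem_Pfin.1 (hM ((mem_rowList hM).1 hb))).le_ordKey
  refine ⟨fun hji => ?_, fun hjb => hbj.ne (hjb ▸ rfl)⟩
  rw [hji, ordKey_of_pos (zero_lt_one.trans_le hij.1)] at hbj
  omega

theorem rowPerm_MO_princ_mem_stabilizer (hO : O ⊆ Pfin n) (hij : inP n (i, j)) {a : ℤ}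
    (ha : 1 ≤ a) (hai : a < i) :
    rowPerm n a (MO n O (princ n (i, j))) ∈
      stabilizer (Equiv.Perm ℤ) (ordKey n ⁻¹' Set.Icc a (ordKey n j)) := by
  have hij' : i ≤ ordKey n j := hij.le_ordKey
  refine rowPerm_mem_stabilizer (MO_princ_subset hO hij) ?_ fun b hb => ?_
  · rw [Set.mem_preimage, ordKey_of_pos (by omega : 0 < a), Set.mem_Icc]
    omega
  · rcases (mem_MO_princ hO hij).1 hb with ⟨hb, -, hbj⟩ | h
    · obtain ⟨-, -, hab, hbn⟩ := mem_Pfin.1 (hO hb)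
      exact ⟨hab.trans (abs_le_ordKey hbn), hbj⟩
    · exact absurd (Prod.mk.inj h).1 hai.ne

theorem rowPerm_apply_eq_rowPerm_MO_princ_apply (hO : O ⊆ Pfin n) (hij : inP n (i, j)) {a v : ℤ}
    (hai : a < i) (hva : v ≠ a) (hvj : ordKey n v ≤ ordKey n j) :
    rowPerm n a O v = rowPerm n a (MO n O (princ n (i, j))) v := by
  set p : ℤ → Bool := fun b => decide (ordKey n b ≤ ordKey n j)
  have hlow : (rowList n a O).filter p = rowList n a (MO n O (princ n (i, j))) := by
    rw [rowList, rowList, List.filter_filter]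
    refine List.filter_congr fun b _ => ?_
    rw [Bool.eq_iff_iff]
    simp only [p, Bool.and_eq_true, decide_eq_true_eq, mem_MO_princ hO hij, ple, Prod.mk.injEq,
      hai.le, hai.ne, true_and, false_and, or_false]
    exact and_comm
  rw [rowPerm, ← List.filter_append_filter_not_of_pairwise (p := p)
      ((rowList_pairwise a O).imp fun hlt hp => by simp only [p, decide_eq_true_eq] at hp ⊢; omega),
    hlow, List.map_append, List.prod_append, Equiv.Perm.mul_apply, rowPerm]
  congr 1
  refine Equiv.Perm.prod_map_swap_apply_eq_self fun b hb => ⟨hva, fun hvb => ?_⟩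
  simp only [p, List.mem_filter, Bool.not_eq_true', decide_eq_false_iff_not] at hb
  exact hb.2 (hvb ▸ hvj)

theorem lowerRowsPerm_MO_princ_apply (hO : O ⊆ Pfin n) (hij : inP n (i, j)) :
    ∀ (k : ℕ), (k : ℤ) < i → ∀ v ∈ ordKey n ⁻¹' Set.Icc ((k : ℤ) + 1) (ordKey n j),
      lowerRowsPerm n (MO n O (princ n (i, j))) k v = lowerRowsPerm n O k v
  | 0, _, _, _ => rfl
  | k + 1, hki, v, hv => by
    have hrow (M : Finset (ℤ × ℤ)) : lowerRowsPerm n M (k + 1) v =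
        lowerRowsPerm n M k (rowPerm n ((k : ℤ) + 1) M v) := by
      rw [lowerRowsPerm, List.range_succ, List.map_append, List.prod_append, List.map_singleton,
        List.prod_singleton, Equiv.Perm.mul_apply, ← lowerRowsPerm]
    push_cast at hki hv
    rw [Set.mem_preimage, Set.mem_Icc] at hv
    have hvk : v ≠ k + 1 := by
      rintro rfl
      rw [ordKey_of_pos (by omega)] at hv
      omega
    have hmem := (Equiv.Perm.bijOn_of_mem_stabilizer (rowPerm_MO_princ_mem_stabilizer hO hij
      (by omega : (1 : ℤ) ≤ k + 1) hki)).mapsTo (x := v) ⟨by omega, hv.2⟩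
    rw [hrow, hrow, rowPerm_apply_eq_rowPerm_MO_princ_apply hO hij hki hvk hv.2]
    exact lowerRowsPerm_MO_princ_apply hO hij k (by omega) _ hmem

theorem upperRowsPerm_MO_princ (hO : O ⊆ Pfin n) {k : ℕ} (hkj : inP n ((k : ℤ) + 1, j)) :
    upperRowsPerm n (MO n O (princ n ((k : ℤ) + 1, j))) k =
      rowPerm n ((k : ℤ) + 1) (MO n O (princ n ((k : ℤ) + 1, j))) := by
  obtain ⟨m, hm⟩ : ∃ m, n - k = m + 1 := ⟨n - k - 1, by have := hkj.2.1; simp only at this; omega⟩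
  rw [upperRowsPerm, hm, List.range_succ_eq_map, List.map_cons, List.prod_cons,
    List.prod_eq_one, mul_one, Nat.cast_zero, add_zero]
  simp only [List.map_map, List.mem_map, List.mem_range, Function.comp_apply]
  rintro _ ⟨t, -, rfl⟩
  exact rowPerm_MO_princ_of_lt hO hkj (by push_cast; omega)

theorem rMap_eq_upperRowsPerm_inv_apply (hO : O ⊆ Pfin n) {k : ℕ}
    (hkj : inP n ((k : ℤ) + 1, j)) : rMap n O ((k : ℤ) + 1) j = (upperRowsPerm n O k)⁻¹ j := by
  have hkn : k ≤ n := by have := hkj.2.1; simp only at this; omega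
  have hj : (k : ℤ) + 1 ≤ ordKey n j := hkj.le_ordKey
  rw [rMap, wOJ, Equiv.Perm.mul_apply, wPerm_eq_lowerRowsPerm_mul_upperRowsPerm _ hkn,
    wPerm_eq_lowerRowsPerm_mul_upperRowsPerm _ hkn, Equiv.Perm.mul_apply,
    upperRowsPerm_MO_princ hO hkj, rowPerm_MO_princ_self_apply hO hkj,
    lowerRowsPerm_MO_princ_apply hO hkj k (by omega) j ⟨hj, le_rfl⟩,
    ← Equiv.Perm.mul_apply, mul_inv_rev, inv_mul_cancel_right]

end Principal

theorem stmt3_general (n : ℕ) (O : Finset (ℤ × ℤ)) (hO : O ⊆ Pfin n)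
    (i : ℤ) (hi1 : 1 ≤ i) (hin : i ≤ (n : ℤ)) :
    Set.BijOn (rMap n O i) {j : ℤ | i ≤ |j| ∧ |j| ≤ (n : ℤ)}
      {j : ℤ | i ≤ |j| ∧ |j| ≤ (n : ℤ)} := by
  obtain ⟨k, rfl⟩ : ∃ k : ℕ, i = k + 1 := ⟨(i - 1).toNat, by omega⟩
  exact (Equiv.Perm.bijOn_of_mem_stabilizer (inv_mem (upperRowsPerm_mem_stabilizer hO k))).congr
    fun j hj => (rMap_eq_upperRowsPerm_inv_apply hO ⟨hi1, hin, hj⟩).symm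

/-- For fixed `i ∈ [1,n]`, the map `j ↦ r(i,j)` is a bijection from
`[i,n] ∪ [−n,−i]` to itself. -/
theorem stmt3 (n : ℕ) (O : Finset (ℤ × ℤ)) (hA : Aset n ⊆ O) (hO : O ⊆ Pfin n)
    (i : ℤ) (hi1 : 1 ≤ i) (hin : i ≤ (n : ℤ)) :
    Set.BijOn (rMap n O i) {j : ℤ | i ≤ |j| ∧ |j| ≤ (n : ℤ)}
      {j : ℤ | i ≤ |j| ∧ |j| ≤ (n : ℤ)} :=
  stmt3_general n O hO i hi1 hin

end
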